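/- arXiv:1403.5814 — 8 statements merged into one kernel-verified Lean document; each statement's English description precedes it below -/
import Mathlib

section
/- If X is a nonempty finite-dimensional Noetherian topological space in which every maximal chain of irreducible closed subsets has the same length (i.e., X is biequidimensional), then all irreducible components of X have the same dimension, equal to dim X. -/
open Order TopologicalSpace

/-- A maximal chain of irreducible closed subsets: a strictly increasing chain that starts
at a minimal element, ends at a maximal element, and in which each step is a covering
(no element can be inserted in between). -/
def IsMaximalChain {α : Type*} [PartialOrder α] (p : LTSeries α) : Prop :=
  IsMin p.head ∧ IsMax p.last ∧ ∀ i : Fin p.length, p.toFun i.castSucc ⋖ p.toFun i.succ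

section Aux

variable {α : Type*}

/-- In a nonempty order of finite Krull dimension there is a longest `LTSeries`. -/
lemma exists_longest_aux [Preorder α] [Nonempty α] (h : Order.krullDim α < ⊤) :
    ∃ p : LTSeries α, (∀ q : LTSeries α, q.length ≤ p.length) ∧
      Order.krullDim α = p.length := by
  have hne : Nonempty (LTSeries α) := ⟨RelSeries.singleton _ (Classical.arbitrary α)⟩
  have hks := Order.krullDim_eq_iSup_length (α := α)
  have h' : (⨆ p : LTSeries α, (p.length : ℕ∞)) < ⊤ := by
    by_contra htop
    rw [not_lt, top_le_iff] at htop
    rw [hks, htop] at h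
    simp at h
  obtain ⟨p, hp⟩ := ENat.exists_eq_iSup_of_lt_top h'
  have hle : ∀ q : LTSeries α, q.length ≤ p.length := by
    intro q
    have : (q.length : ℕ∞) ≤ (p.length : ℕ∞) := by
      rw [hp]; exact le_iSup (fun r : LTSeries α => (r.length : ℕ∞)) q
    exact_mod_cast this
  refine ⟨p, hle, ?_⟩
  rw [hks, ← hp]
  norm_cast

/-- A longest `LTSeries` is a maximal chain. -/
lemma isMaximalChain_of_longest [PartialOrder α] (p : LTSeries α)
    (hp : ∀ q : LTSeries α, q.length ≤ p.length) : IsMaximalChain p := by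
  refine ⟨?_, ?_, ?_⟩
  · intro b hb
    rcases eq_or_lt_of_le hb with h | h
    · exact h.ge
    · have := hp (p.cons b h)
      simp [RelSeries.cons_length] at this
  · intro b hb
    rcases eq_or_lt_of_le hb with h | h
    · exact h.ge
    · have := hp (p.snoc b h)
      simp [RelSeries.snoc_length] at this
  · intro i
    refine ⟨p.step i, fun c h1 h2 => ?_⟩
    have := hp (p.insertNth i c h1 h2)
    simp [RelSeries.insertNth] at this

/-- If `Z` is maximal and `p` is a longest chain in `Set.Iic Z`, then the image of `p` in `α`
is a maximal chain. -/
lemma isMaximalChain_of_longest_Iic [PartialOrder α] {Z : α} (hZ : IsMax Z)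
    (p : LTSeries (Set.Iic Z))
    (hp : ∀ q : LTSeries (Set.Iic Z), q.length ≤ p.length) :
    IsMaximalChain (p.map Subtype.val (fun _ _ h => h)) := by
  have hlast : (p.last : α) = Z := by
    by_contra hne
    have hlt : p.last < (⟨Z, le_refl Z⟩ : Set.Iic Z) :=
      lt_of_le_of_ne p.last.2 (fun h => hne (congrArg Subtype.val h))
    have := hp (p.snoc ⟨Z, le_refl Z⟩ hlt)
    simp [RelSeries.snoc_length] at this
  refine ⟨?_, ?_, ?_⟩
  · intro b hb
    rcases eq_or_lt_of_le hb with h | h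
    · exact h.ge
    · have hbZ : b ≤ Z := le_trans h.le p.head.2
      have hlt : (⟨b, hbZ⟩ : Set.Iic Z) < p.head := Subtype.coe_lt_coe.mp h
      have := hp (p.cons ⟨b, hbZ⟩ hlt)
      simp [RelSeries.cons_length] at this
  · have : (p.map Subtype.val (fun _ _ h => h)).last = Z := hlast
    rw [this]
    exact hZ
  · intro i
    refine ⟨(p.map Subtype.val (fun _ _ h => h)).step i, fun c h1 h2 => ?_⟩
    have hcZ : c ≤ Z := le_trans h2.le (p i.succ).2
    have := hp (p.insertNth i ⟨c, hcZ⟩ (Subtype.coe_lt_coe.mp h1) (Subtype.coe_lt_coe.mp h2))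
    simp [RelSeries.insertNth] at this

end Aux

/-- If `X` is a nonempty finite-dimensional Noetherian topological space in which every maximal
chain of irreducible closed subsets has the same length, then every irreducible component
(maximal irreducible closed subset) `Z` of `X` has dimension equal to `dim X`. -/
theorem stmt_0 (X : Type*) [TopologicalSpace X] [NoetherianSpace X] [Nonempty X]
    (hfd : topologicalKrullDim X < ⊤)
    (hbieq : ∀ p q : LTSeries (IrreducibleCloseds X),
      IsMaximalChain p → IsMaximalChain q → p.length = q.length) :
    ∀ Z : IrreducibleCloseds X, IsMax Z →
      Order.krullDim (Set.Iic Z) = topologicalKrullDim X := by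
  intro Z hZ
  have hdim : topologicalKrullDim X = Order.krullDim (IrreducibleCloseds X) := rfl
  have hα : Nonempty (IrreducibleCloseds X) :=
    ⟨⟨closure {Classical.arbitrary X}, isIrreducible_singleton.closure, isClosed_closure⟩⟩
  have hIic : Nonempty (Set.Iic Z) := ⟨⟨Z, le_refl Z⟩⟩
  have hIicdim : Order.krullDim (Set.Iic Z) < ⊤ :=
    lt_of_le_of_lt
      (Order.krullDim_le_of_strictMono Subtype.val (fun _ _ h => h)) (hdim ▸ hfd)
  obtain ⟨p, hp, hpdim⟩ := exists_longest_aux hIicdim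
  obtain ⟨q, hq, hqdim⟩ := exists_longest_aux (hdim ▸ hfd)
  have h1 : IsMaximalChain (p.map Subtype.val (fun _ _ h => h)) :=
    isMaximalChain_of_longest_Iic hZ p hp
  have h2 : IsMaximalChain q := isMaximalChain_of_longest q hq
  have h3 := hbieq _ _ h1 h2
  rw [hdim, hpdim, hqdim, ← h3]
  rfl
end

section
/- If X is a nonempty finite-dimensional Noetherian topological space in which every maximal chain of irreducible closed subsets has the same length, then every minimal irreducible closed subset of X has codimension in X equal to dim X. -/
open Order TopologicalSpace

/-!
Since `X` is finite-dimensional, there is a longest chain of irreducible closed subsets starting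
at a minimal one `Y`; it can be neither refined nor extended, so it is a maximal chain, and so is
a longest chain of `X`. The two therefore have the same length, i.e. `codim Y = dim X`.
-/

namespace LTSeries

variable {α : Type*} [PartialOrder α]

lemma head_insertNth (p : LTSeries α) (i : Fin p.length) (a : α)
    (h₁ : p i.castSucc < a) (h₂ : a < p i.succ) :
    (p.insertNth i a h₁ h₂).head = p.head := by
  simp only [RelSeries.head, RelSeries.insertNth]
  change Fin.insertNth _ _ _ (0 : Fin (p.length + 2)) = _
  rw [Fin.insertNth_apply_below (by simp [Fin.lt_def])]
  rfl

lemma isMaximalChain_of_isMin_of_forall_length_le {p : LTSeries α} (hmin : IsMin p.head)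
    (hlong : ∀ q : LTSeries α, q.head = p.head → q.length ≤ p.length) : IsMaximalChain p := by
  refine ⟨hmin, ?_, fun i => ?_⟩
  · by_contra hmax
    obtain ⟨b, hb⟩ := not_isMax_iff.mp hmax
    simpa using hlong (p.snoc b hb) (by simp)
  · by_contra hcov
    obtain ⟨c, h₁, h₂⟩ := (not_covBy_iff (p.step i)).mp hcov
    simpa using hlong (p.insertNth i c h₁ h₂) (head_insertNth p i c h₁ h₂)

lemma isMaximalChain_longestOf [FiniteDimensionalOrder α] :
    IsMaximalChain (LTSeries.longestOf α) := by
  refine isMaximalChain_of_isMin_of_forall_length_le ?_ fun q _ => longestOf_is_longest q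
  by_contra hmin
  obtain ⟨b, hb⟩ := not_isMin_iff.mp hmin
  simpa using longestOf_is_longest ((LTSeries.longestOf α).cons b hb)

end LTSeries

open LTSeries in
lemma Order.coheight_eq_krullDim_of_isMin {α : Type*} [PartialOrder α] [FiniteDimensionalOrder α]
    (hcatenary : ∀ p q : LTSeries α, IsMaximalChain p → IsMaximalChain q → p.length = q.length)
    {a : α} (ha : IsMin a) : (coheight a : WithBot ℕ∞) = krullDim α := by
  obtain ⟨n, hn⟩ := ENat.ne_top_iff_exists.mp (coheight_lt_top a).ne
  obtain ⟨p, rfl, rfl⟩ := exists_series_of_coheight_eq_coe _ hn.symm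
  have hmax : IsMaximalChain p := isMaximalChain_of_isMin_of_forall_length_le ha fun q hq => by
    exact_mod_cast hn ▸ hq ▸ length_le_coheight_head (p := q)
  rw [krullDim_eq_length_of_finiteDimensionalOrder, ← hcatenary p _ hmax isMaximalChain_longestOf,
    ← hn]
  rfl

theorem stmt_1_general (X : Type*) [TopologicalSpace X]
    (hfd : topologicalKrullDim X < ⊤)
    (hbieq : ∀ p q : LTSeries (IrreducibleCloseds X),
      IsMaximalChain p → IsMaximalChain q → p.length = q.length) :
    ∀ Y : IrreducibleCloseds X, IsMin Y →
      Order.krullDim (Set.Ici Y) = topologicalKrullDim X := by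
  intro Y hY
  have : FiniteDimensionalOrder (IrreducibleCloseds X) :=
    finiteDimensionalOrder_iff_krullDim_ne_bot_and_top.mpr
      ⟨krullDim_ne_bot_iff.mpr ⟨Y⟩, hfd.ne⟩
  rw [← coheight_eq_krullDim_Ici]
  exact coheight_eq_krullDim_of_isMin hbieq hY

/-- If `X` is a nonempty finite-dimensional Noetherian topological space in which every maximal
chain of irreducible closed subsets has the same length, then every minimal irreducible closed
subset `Y` of `X` has codimension in `X` equal to `dim X`.  The codimension of `Y` in `X` is the
supremum of lengths of chains of irreducible closed subsets starting at `Y`, i.e. the Krull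
dimension of the interval `[Y, ∞)`. -/
theorem stmt_1 (X : Type*) [TopologicalSpace X] [NoetherianSpace X] [Nonempty X]
    (hfd : topologicalKrullDim X < ⊤)
    (hbieq : ∀ p q : LTSeries (IrreducibleCloseds X),
      IsMaximalChain p → IsMaximalChain q → p.length = q.length) :
    ∀ Y : IrreducibleCloseds X, IsMin Y →
      Order.krullDim (Set.Ici Y) = topologicalKrullDim X :=
  stmt_1_general X hfd hbieq
end

section
/- Let X be a nonempty finite-dimensional Noetherian topological space that is equidimensional and catenary, and such that every irreducible component of X is equicodimensional. Then X is biequidimensional, i.e., every maximal chain of irreducible closed subsets of X has length dim X. -/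
/-!
By catenarity, a maximal chain from a minimal `Y` to a maximal `T` has length `dim [Y, T]`, which
does not depend on `Y` because `T` is equicodimensional; taking for `Y` the bottom of a longest
chain below `T` shows that this common value is `dim T`. By equidimensionality it does not depend
on `T` either, so all maximal chains have the same length as a longest one, namely `dim X`.
-/

open Order TopologicalSpace

-- Saturated chains are encoded as the series of the covering relation.
def IsCatenaryOrder (α : Type*) [Preorder α] : Prop :=
  ∀ p q : RelSeries {x : α × α | x.1 ⋖ x.2}, p.head = q.head → p.last = q.last →
    p.length = q.length

lemma finiteDimensionalOrder_of_strictMono {α β : Type*} [Preorder α] [Preorder β] [Nonempty α]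
    (f : α → β) (hf : StrictMono f) [FiniteDimensionalOrder β] : FiniteDimensionalOrder α :=
  finiteDimensionalOrder_iff_krullDim_ne_bot_and_top.2 ⟨krullDim_ne_bot_iff.2 ‹_›,
    ne_top_of_le_ne_top krullDim_ne_top_of_finiteDimensionalOrder
      (krullDim_le_of_strictMono f hf)⟩

lemma LTSeries.length_le_krullDim_of_forall_mem {α : Type*} [Preorder α] {s : Set α}
    (p : LTSeries α) (h : ∀ i, p i ∈ s) : (p.length : WithBot ℕ∞) ≤ krullDim s :=
  LTSeries.length_le_krullDim ⟨p.length, fun i => ⟨p i, h i⟩, fun i => p.step i⟩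

section PartialOrder

variable {α : Type*} [PartialOrder α]

lemma isMaximalChain_longestOf [FiniteDimensionalOrder α] :
    IsMaximalChain (LTSeries.longestOf α) := by
  set r := LTSeries.longestOf α
  refine ⟨fun x hx => ?_, fun x hx => ?_, fun i => ⟨r.step i, fun c hc₁ hc₂ => ?_⟩⟩
  · by_contra hlt
    simpa [r] using LTSeries.longestOf_is_longest (r.cons x (lt_of_le_not_ge hx hlt))
  · by_contra hlt
    simpa [r] using LTSeries.longestOf_is_longest (r.snoc x (lt_of_le_not_ge hx hlt))
  · simpa [r, RelSeries.insertNth] using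
      LTSeries.longestOf_is_longest (r.insertNth i c hc₁ hc₂)

lemma IsCatenaryOrder.length_eq_krullDim_Icc [FiniteDimensionalOrder α]
    (hcat : IsCatenaryOrder α) (q : RelSeries {x : α × α | x.1 ⋖ x.2}) :
    (q.length : WithBot ℕ∞) = krullDim (Set.Icc q.head q.last) := by
  have hle : q.head ≤ q.last := LTSeries.head_le_last (q.ofLE fun _ h => h.lt)
  have : Nonempty (Set.Icc q.head q.last) := ⟨⟨q.head, le_rfl, hle⟩⟩
  have := finiteDimensionalOrder_of_strictMono (Subtype.val : Set.Icc q.head q.last → α)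
    (Subtype.strictMono_coe _)
  obtain ⟨hmin, hmax, hcov⟩ := isMaximalChain_longestOf (α := Set.Icc q.head q.last)
  set r := LTSeries.longestOf (Set.Icc q.head q.last)
  let r' : RelSeries {x : α × α | x.1 ⋖ x.2} :=
    ⟨r.length, fun i => r i,
      fun i => show _ ⋖ _ from (hcov i).image (OrderEmbedding.subtype _)
        (by rw [OrderEmbedding.coe_subtype, Subtype.range_coe]; exact Set.ordConnected_Icc)⟩
  have hhead : q.head = r'.head :=
    congrArg Subtype.val (hmin.eq_of_le (b := ⟨_, le_rfl, hle⟩) r.head.2.1)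
  have hlast : q.last = r'.last :=
    congrArg Subtype.val (hmax.eq_of_ge (b := ⟨_, hle, le_rfl⟩) r.last.2.2)
  rw [krullDim_eq_length_of_finiteDimensionalOrder]
  exact_mod_cast hcat q r' hhead hlast

lemma krullDim_Iic_eq_krullDim_Icc [FiniteDimensionalOrder α] {T : α}
    (hT : ∀ Y Y' : α, IsMin Y → IsMin Y' → Y ≤ T → Y' ≤ T →
      krullDim (Set.Icc Y T) = krullDim (Set.Icc Y' T))
    {Y : α} (hY : IsMin Y) (hYT : Y ≤ T) :
    krullDim (Set.Iic T) = krullDim (Set.Icc Y T) := by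
  refine le_antisymm ?_ (krullDim_le_of_strictMono (fun z => ⟨z.1, z.2.2⟩) fun _ _ h => h)
  have : Nonempty (Set.Iic T) := ⟨⟨T, le_rfl⟩⟩
  have := finiteDimensionalOrder_of_strictMono (Subtype.val : Set.Iic T → α)
    (Subtype.strictMono_coe _)
  set r := LTSeries.longestOf (Set.Iic T)
  have hmin : IsMin (r.head : α) := fun c hc =>
    (isMaximalChain_longestOf (α := Set.Iic T)).1
      (show (⟨c, hc.trans r.head.2⟩ : Set.Iic T) ≤ r.head from hc)
  rw [krullDim_eq_length_of_finiteDimensionalOrder, ← hT _ Y hmin hY r.head.2 hYT]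
  exact (r.map _ (Subtype.strictMono_coe _)).length_le_krullDim_of_forall_mem
    fun i => ⟨r.head_le i, (r i).2⟩

lemma IsMaximalChain.length_eq_krullDim_Iic_last [FiniteDimensionalOrder α]
    (hcat : IsCatenaryOrder α) {p : LTSeries α} (hp : IsMaximalChain p)
    (hcodim : ∀ Y Y' : α, IsMin Y → IsMin Y' → Y ≤ p.last → Y' ≤ p.last →
      krullDim (Set.Icc Y p.last) = krullDim (Set.Icc Y' p.last)) :
    (p.length : WithBot ℕ∞) = krullDim (Set.Iic p.last) :=
  calc (p.length : WithBot ℕ∞)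
      = krullDim (Set.Icc p.head p.last) :=
        hcat.length_eq_krullDim_Icc ⟨p.length, p, hp.2.2⟩
    _ = krullDim (Set.Iic p.last) :=
        (krullDim_Iic_eq_krullDim_Icc hcodim hp.1 p.head_le_last).symm

theorem IsMaximalChain.length_eq_krullDim [FiniteDimensionalOrder α]
    (hequidim : ∀ Z Z' : α, IsMax Z → IsMax Z' → krullDim (Set.Iic Z) = krullDim (Set.Iic Z'))
    (hcat : IsCatenaryOrder α)
    (hcompeqcodim : ∀ T : α, IsMax T → ∀ Y Y' : α, IsMin Y → IsMin Y' → Y ≤ T → Y' ≤ T →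
      krullDim (Set.Icc Y T) = krullDim (Set.Icc Y' T))
    {p : LTSeries α} (hp : IsMaximalChain p) : (p.length : WithBot ℕ∞) = krullDim α := by
  have hq := isMaximalChain_longestOf (α := α)
  calc (p.length : WithBot ℕ∞)
      = krullDim (Set.Iic p.last) :=
        hp.length_eq_krullDim_Iic_last hcat (hcompeqcodim _ hp.2.1)
    _ = krullDim (Set.Iic (LTSeries.longestOf α).last) := hequidim _ _ hp.2.1 hq.2.1
    _ = (LTSeries.longestOf α).length :=
        (hq.length_eq_krullDim_Iic_last hcat (hcompeqcodim _ hq.2.1)).symm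
    _ = krullDim α := krullDim_eq_length_of_finiteDimensionalOrder.symm

end PartialOrder

theorem stmt_3_general (X : Type*) [TopologicalSpace X]
    (hfd : topologicalKrullDim X < ⊤)
    (hequidim : ∀ Z Z' : IrreducibleCloseds X, IsMax Z → IsMax Z' →
      Order.krullDim (Set.Iic Z) = Order.krullDim (Set.Iic Z'))
    (hcat : ∀ p q : RelSeries {x : IrreducibleCloseds X × IrreducibleCloseds X | x.1 ⋖ x.2},
      p.head = q.head → p.last = q.last → p.length = q.length)
    (hcompeqcodim : ∀ T : IrreducibleCloseds X, IsMax T →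
      ∀ Y Y' : IrreducibleCloseds X, IsMin Y → IsMin Y' → Y ≤ T → Y' ≤ T →
        Order.krullDim (Set.Icc Y T) = Order.krullDim (Set.Icc Y' T)) :
    ∀ p : LTSeries (IrreducibleCloseds X), IsMaximalChain p →
      (p.length : WithBot ℕ∞) = topologicalKrullDim X := by
  intro p hp
  have : Nonempty (IrreducibleCloseds X) := ⟨p.head⟩
  have : FiniteDimensionalOrder (IrreducibleCloseds X) :=
    finiteDimensionalOrder_iff_krullDim_ne_bot_and_top.2 ⟨krullDim_ne_bot_iff.2 ‹_›, hfd.ne⟩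
  exact hp.length_eq_krullDim hequidim hcat hcompeqcodim

/-- Let `X` be a nonempty finite-dimensional Noetherian topological space that is
equidimensional (all irreducible components have the same dimension), catenary (all saturated
chains between two fixed irreducible closed subsets have the same length), and such that every
irreducible component of `X` is equicodimensional (all minimal irreducible closed subsets
contained in it have the same codimension in it).  Then `X` is biequidimensional: every
maximal chain of irreducible closed subsets of `X` has length `dim X`. -/
theorem stmt_3 (X : Type*) [TopologicalSpace X] [NoetherianSpace X] [Nonempty X]
    (hfd : topologicalKrullDim X < ⊤)
    (hequidim : ∀ Z Z' : IrreducibleCloseds X, IsMax Z → IsMax Z' →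
      Order.krullDim (Set.Iic Z) = Order.krullDim (Set.Iic Z'))
    (hcat : ∀ p q : RelSeries {x : IrreducibleCloseds X × IrreducibleCloseds X | x.1 ⋖ x.2},
      p.head = q.head → p.last = q.last → p.length = q.length)
    (hcompeqcodim : ∀ T : IrreducibleCloseds X, IsMax T →
      ∀ Y Y' : IrreducibleCloseds X, IsMin Y → IsMin Y' → Y ≤ T → Y' ≤ T →
        Order.krullDim (Set.Icc Y T) = Order.krullDim (Set.Icc Y' T)) :
    ∀ p : LTSeries (IrreducibleCloseds X), IsMaximalChain p →
      (p.length : WithBot ℕ∞) = topologicalKrullDim X :=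
  stmt_3_general X hfd hequidim hcat hcompeqcodim
end

section
/- Let X be a nonempty finite-dimensional Noetherian topological space. Then X is biequidimensional if and only if X is equicodimensional and for all irreducible closed subsets Y ⊆ Z of X one has codim(Y, X) = codim(Y, Z) + codim(Z, X). -/
open Order TopologicalSpace

/-!
A longest chain in a poset is saturated and runs from a minimal to a maximal element, so in finite
Krull dimension every `Set.Icc a b`, `Set.Ici a` and `Set.Iic a` contains a saturated chain
realising its dimension. If all maximal chains have the same length, then for `a ≤ b` a saturated
chain from a minimal element to `a` can be continued either by a longest chain above `a` or by
longest chains from `a` to `b` and above `b`; both give maximal chains, and comparing lengths yields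
`codim a = codim (a, b) + codim b`. Conversely, additivity applied along the covering steps of a
maximal chain shows that its length is the codimension of its minimal head, which
equicodimensionality makes independent of the chain.
-/

namespace LTSeries

variable {α : Type*} [PartialOrder α]

def IsSaturated (p : LTSeries α) : Prop := ∀ i : Fin p.length, p i.castSucc ⋖ p i.succ

lemma IsSaturated.smash {p q : LTSeries α} (h : p.last = q.head)
    (hp : p.IsSaturated) (hq : q.IsSaturated) : IsSaturated (p.smash q h) := by
  intro i
  refine Fin.addCases (fun i => ?_) (fun i => ?_) i
  · convert hp i using 1
    exacts [RelSeries.smash_castAdd h i, RelSeries.smash_succ_castAdd h i]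
  · convert hq i using 1
    exacts [RelSeries.smash_natAdd h i, RelSeries.smash_succ_natAdd h i]

lemma IsSaturated.map_val {S : Set α} (hS : S.OrdConnected) {p : LTSeries S}
    (hp : p.IsSaturated) : IsSaturated (p.map Subtype.val (Subtype.strictMono_coe _)) :=
  fun i => (hp i).image (OrderEmbedding.subtype (· ∈ S)) (by simpa using hS)

end LTSeries

section

variable {α : Type*} [PartialOrder α]

lemma isMaximalChain_of_forall_length_le {p : LTSeries α}
    (hp : ∀ q : LTSeries α, q.length ≤ p.length) : IsMaximalChain p := by
  refine ⟨fun b hb => ?_, fun b hb => ?_, fun i => ⟨p.step i, fun c hc₁ hc₂ => ?_⟩⟩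
  · by_contra hpb
    simpa using hp (p.cons b (lt_of_le_not_ge hb hpb))
  · by_contra hpb
    simpa using hp (p.snoc b (lt_of_le_not_ge hb hpb))
  · simpa using hp (p.insertNth i c hc₁ hc₂)

lemma exists_isMaximalChain_length_eq_krullDim [Nonempty α] (h : krullDim α < ⊤) :
    ∃ p : LTSeries α, IsMaximalChain p ∧ krullDim α = p.length := by
  have : FiniteDimensionalOrder α :=
    finiteDimensionalOrder_iff_krullDim_ne_bot_and_top.mpr ⟨krullDim_ne_bot_iff.mpr ‹_›, h.ne⟩
  exact ⟨_, isMaximalChain_of_forall_length_le LTSeries.longestOf_is_longest,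
    krullDim_eq_length_of_finiteDimensionalOrder⟩

lemma krullDim_set_lt_top (h : krullDim α < ⊤) (S : Set α) : krullDim S < ⊤ :=
  (krullDim_le_of_strictMono _ (Subtype.strictMono_coe _)).trans_lt h

lemma exists_isSaturated_Icc (h : krullDim α < ⊤) {a b : α} (hab : a ≤ b) :
    ∃ p : LTSeries α, p.head = a ∧ p.last = b ∧ p.IsSaturated ∧
      krullDim (Set.Icc a b) = p.length := by
  have : Nonempty (Set.Icc a b) := ⟨⟨a, le_rfl, hab⟩⟩
  obtain ⟨q, ⟨hmin, hmax, hsat⟩, hq⟩ :=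
    exists_isMaximalChain_length_eq_krullDim (krullDim_set_lt_top h (Set.Icc a b))
  refine ⟨q.map _ (Subtype.strictMono_coe _), ?_, ?_,
    LTSeries.IsSaturated.map_val Set.ordConnected_Icc hsat, hq⟩
  · exact le_antisymm (hmin (show ⟨a, le_rfl, hab⟩ ≤ q.head from q.head.2.1)) q.head.2.1
  · exact le_antisymm q.last.2.2 (hmax (show q.last ≤ ⟨b, hab, le_rfl⟩ from q.last.2.2))

lemma exists_isSaturated_Ici (h : krullDim α < ⊤) (a : α) :
    ∃ p : LTSeries α, p.head = a ∧ IsMax p.last ∧ p.IsSaturated ∧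
      krullDim (Set.Ici a) = p.length := by
  have : Nonempty (Set.Ici a) := ⟨⟨a, le_rfl⟩⟩
  obtain ⟨q, ⟨hmin, hmax, hsat⟩, hq⟩ :=
    exists_isMaximalChain_length_eq_krullDim (krullDim_set_lt_top h (Set.Ici a))
  refine ⟨q.map _ (Subtype.strictMono_coe _), ?_, ?_,
    LTSeries.IsSaturated.map_val Set.ordConnected_Ici hsat, hq⟩
  · exact le_antisymm (hmin (show ⟨a, le_rfl⟩ ≤ q.head from q.head.2)) q.head.2
  · exact fun c hc => hmax (show q.last ≤ ⟨c, q.last.2.trans hc⟩ from hc)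

lemma exists_isSaturated_Iic (h : krullDim α < ⊤) (a : α) :
    ∃ p : LTSeries α, IsMin p.head ∧ p.last = a ∧ p.IsSaturated := by
  have : Nonempty (Set.Iic a) := ⟨⟨a, le_rfl⟩⟩
  obtain ⟨q, ⟨hmin, hmax, hsat⟩, -⟩ :=
    exists_isMaximalChain_length_eq_krullDim (krullDim_set_lt_top h (Set.Iic a))
  refine ⟨q.map _ (Subtype.strictMono_coe _), ?_, ?_,
    LTSeries.IsSaturated.map_val Set.ordConnected_Iic hsat⟩
  · exact fun c hc => hmin (show ⟨c, hc.trans q.head.2⟩ ≤ q.head from hc)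
  · exact le_antisymm q.last.2 (hmax (show q.last ≤ ⟨a, le_rfl⟩ from q.last.2))

lemma krullDim_Ici_of_isMax {a : α} (ha : IsMax a) : krullDim (Set.Ici a) = 0 := by
  rw [ha.Ici_eq]
  exact krullDim_eq_zero

lemma CovBy.krullDim_Icc {a b : α} (hab : a ⋖ b) : krullDim (Set.Icc a b) = 1 := by
  refine le_antisymm (krullDim_le_one_iff.mpr fun x => ?_) (one_le_krullDim_iff.mpr ?_)
  · rcases hab.eq_or_eq x.2.1 x.2.2 with hx | hx
    · exact Or.inl fun y _ => show (x : α) ≤ y from hx.trans_le y.2.1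
    · exact Or.inr fun y _ => show (y : α) ≤ x from y.2.2.trans_eq hx.symm
  · exact ⟨⟨a, le_rfl, hab.le⟩, ⟨b, hab.le, le_rfl⟩, hab.lt⟩

end

section

variable (α : Type*) [PartialOrder α]

def Biequidimensional : Prop :=
  ∀ p q : LTSeries α, IsMaximalChain p → IsMaximalChain q → p.length = q.length

def Equicodimensional : Prop :=
  ∀ a b : α, IsMin a → IsMin b → krullDim (Set.Ici a) = krullDim (Set.Ici b)

def CodimAdditive : Prop :=
  ∀ a b : α, a ≤ b → krullDim (Set.Ici a) = krullDim (Set.Icc a b) + krullDim (Set.Ici b)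

variable {α}

lemma Biequidimensional.equicodimensional (h : krullDim α < ⊤) (hbi : Biequidimensional α) :
    Equicodimensional α := by
  intro a b ha hb
  obtain ⟨p, rfl, hp_max, hp_sat, hp⟩ := exists_isSaturated_Ici h a
  obtain ⟨q, rfl, hq_max, hq_sat, hq⟩ := exists_isSaturated_Ici h b
  rw [hp, hq, hbi p q ⟨ha, hp_max, hp_sat⟩ ⟨hb, hq_max, hq_sat⟩]

lemma Biequidimensional.codimAdditive (h : krullDim α < ⊤) (hbi : Biequidimensional α) :
    CodimAdditive α := by
  intro a b hab
  obtain ⟨s, hs_min, hs_last, hs_sat⟩ := exists_isSaturated_Iic h a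
  obtain ⟨r, hr_head, hr_max, hr_sat, hr⟩ := exists_isSaturated_Ici h a
  obtain ⟨t, ht_head, ht_last, ht_sat, ht⟩ := exists_isSaturated_Icc h hab
  obtain ⟨u, hu_head, hu_max, hu_sat, hu⟩ := exists_isSaturated_Ici h b
  have hsr : s.last = r.head := hs_last.trans hr_head.symm
  have htu : t.last = u.head := ht_last.trans hu_head.symm
  have hstu : s.last = (t.smash u htu).head := by simp [hs_last, ht_head]
  have hlen := hbi (s.smash r hsr) (s.smash (t.smash u htu) hstu)
    ⟨by simpa, by simpa, hs_sat.smash hsr hr_sat⟩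
    ⟨by simpa, by simpa, hs_sat.smash hstu (ht_sat.smash htu hu_sat)⟩
  simp only [RelSeries.smash_length] at hlen
  rw [hr, ht, hu]
  norm_cast
  omega

lemma CodimAdditive.krullDim_Ici_head (hadd : CodimAdditive α) {p : LTSeries α}
    (hmax : IsMax p.last) (hsat : p.IsSaturated) : krullDim (Set.Ici p.head) = p.length := by
  suffices ∀ i, krullDim (Set.Ici (p i)) = (p.length - i : ℕ) by exact this 0
  intro i
  induction i using Fin.reverseInduction with
  | last =>
    rw [Fin.val_last, Nat.sub_self, Nat.cast_zero]
    exact krullDim_Ici_of_isMax hmax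
  | cast i ih =>
    rw [hadd _ _ (hsat i).le, (hsat i).krullDim_Icc, ih]
    norm_cast
    simp only [Fin.val_succ, Fin.val_castSucc]
    omega

lemma Biequidimensional.of_equicodimensional_of_codimAdditive (hequi : Equicodimensional α)
    (hadd : CodimAdditive α) : Biequidimensional α := by
  rintro p q ⟨hp_min, hp_max, hp_sat⟩ ⟨hq_min, hq_max, hq_sat⟩
  have := hequi _ _ hp_min hq_min
  rw [hadd.krullDim_Ici_head hp_max hp_sat, hadd.krullDim_Ici_head hq_max hq_sat] at this
  exact_mod_cast this

theorem biequidimensional_iff (h : krullDim α < ⊤) :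
    Biequidimensional α ↔ Equicodimensional α ∧ CodimAdditive α :=
  ⟨fun hbi => ⟨hbi.equicodimensional h, hbi.codimAdditive h⟩,
    fun ⟨hequi, hadd⟩ => .of_equicodimensional_of_codimAdditive hequi hadd⟩

end

theorem stmt_5_general (X : Type*) [TopologicalSpace X]
    (hfd : topologicalKrullDim X < ⊤) :
    (∀ p q : LTSeries (IrreducibleCloseds X),
        IsMaximalChain p → IsMaximalChain q → p.length = q.length) ↔
      ((∀ Y Y' : IrreducibleCloseds X, IsMin Y → IsMin Y' →
          Order.krullDim (Set.Ici Y) = Order.krullDim (Set.Ici Y')) ∧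
        ∀ Y Z : IrreducibleCloseds X, Y ≤ Z →
          Order.krullDim (Set.Ici Y)
            = Order.krullDim (Set.Icc Y Z) + Order.krullDim (Set.Ici Z)) :=
  biequidimensional_iff hfd

/-- Let `X` be a nonempty finite-dimensional Noetherian topological space.  Then `X` is
biequidimensional (all maximal chains of irreducible closed subsets have the same length) if
and only if `X` is equicodimensional (all minimal irreducible closed subsets have the same
codimension in `X`) and for all irreducible closed subsets `Y ⊆ Z` of `X` one has
`codim (Y, X) = codim (Y, Z) + codim (Z, X)`, where `codim (Y, X)` is the Krull dimension of
the poset of irreducible closed subsets containing `Y` and `codim (Y, Z)` that of the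
interval `[Y, Z]`. -/
theorem stmt_5 (X : Type*) [TopologicalSpace X] [NoetherianSpace X] [Nonempty X]
    (hfd : topologicalKrullDim X < ⊤) :
    (∀ p q : LTSeries (IrreducibleCloseds X),
        IsMaximalChain p → IsMaximalChain q → p.length = q.length) ↔
      ((∀ Y Y' : IrreducibleCloseds X, IsMin Y → IsMin Y' →
          Order.krullDim (Set.Ici Y) = Order.krullDim (Set.Ici Y')) ∧
        ∀ Y Z : IrreducibleCloseds X, Y ≤ Z →
          Order.krullDim (Set.Ici Y)
            = Order.krullDim (Set.Icc Y Z) + Order.krullDim (Set.Ici Z)) :=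
  stmt_5_general X hfd
end

section
/- Let A be a Noetherian commutative ring and let p₁ ⊊ p₂ be prime ideals of A such that the height of p₂/p₁ in A/p₁ is at least 2. Then there exist infinitely many prime ideals q of A with p₁ ⊊ q ⊊ p₂. -/
/-!
If only finitely many primes lie strictly between `p₁` and `p₂`, prime avoidance would give
`x ∈ p₂` lying outside `p₁` and outside all of them. Then `p₂` is minimal over `p₁ + (x)`, so
`p₂ / p₁` is minimal over the principal ideal `(x̄)` of `A / p₁`, and Krull's principal ideal
theorem bounds its height by `1`.
-/

namespace Ideal

variable {R : Type*} [CommRing R]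

theorem exists_mem_notMem_of_finite_isPrime {I J : Ideal R} {S : Set (Ideal R)}
    (hS : S.Finite) (hSprime : ∀ q ∈ S, q.IsPrime) (hJI : ¬J ≤ I) (hJS : ∀ q ∈ S, ¬J ≤ q) :
    ∃ x ∈ J, x ∉ I ∧ ∀ q ∈ S, x ∉ q := by
  have hprime : ∀ q ∈ insert I S, q ≠ I → q ≠ I → q.IsPrime := fun q hq hqI _ ↦
    hSprime q (hq.resolve_left hqI)
  have hnot : ¬(J : Set R) ⊆ ⋃ q ∈ insert I S, (q : Set R) := by
    intro hcover
    obtain ⟨q, rfl | hq, hJq⟩ :=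
      (subset_union_prime_finite (f := id) (hS.insert I) I I hprime).mp hcover
    exacts [hJI hJq, hJS q hq hJq]
  obtain ⟨x, hxJ, hx⟩ := Set.not_subset.mp hnot
  simp only [Set.mem_iUnion, Set.mem_insert_iff, exists_prop, not_exists, not_and,
    forall_eq_or_imp] at hx
  exact ⟨x, hxJ, hx.1, fun q hq ↦ hx.2 q hq⟩

theorem mem_minimalPrimes_sup_span_singleton {I P : Ideal R} [P.IsPrime] {x : R}
    (hIP : I ≤ P) (hxP : x ∈ P) (hx : ∀ q : Ideal R, q.IsPrime → I ≤ q → q < P → x ∉ q) :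
    P ∈ (I ⊔ span {x}).minimalPrimes := by
  have hle : I ⊔ span {x} ≤ P := sup_le hIP ((span_singleton_le_iff_mem P).mpr hxP)
  obtain ⟨q, hq, hqP⟩ := exists_minimalPrimes_le hle
  have hxq : x ∈ q := hq.1.2 (mem_sup_right (mem_span_singleton_self x))
  obtain rfl : q = P := by_contra fun hne ↦
    hx q hq.1.1 (le_sup_left.trans hq.1.2) (lt_of_le_of_ne hqP hne) hxq
  exact hq

theorem map_height_le_one_of_finite_isPrime_between [IsNoetherianRing R] {p₁ p₂ : Ideal R}
    [p₂.IsPrime] (hlt : p₁ < p₂) (hfin : {q : Ideal R | q.IsPrime ∧ p₁ < q ∧ q < p₂}.Finite) :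
    (p₂.map (Quotient.mk p₁)).height ≤ 1 := by
  obtain ⟨x, hxp₂, hxp₁, hx⟩ := exists_mem_notMem_of_finite_isPrime hfin (fun q hq ↦ hq.1)
    hlt.not_ge (fun q hq ↦ hq.2.2.not_ge)
  refine map_height_le_one_of_mem_minimalPrimes (x := x)
    (mem_minimalPrimes_sup_span_singleton hlt.le hxp₂ fun q hq hp₁q hqp₂ hxq ↦ ?_)
  rcases hp₁q.lt_or_eq with hp₁q | rfl
  exacts [hx q ⟨hq, hp₁q, hqp₂⟩ hxq, hxp₁ hxq]

end Ideal

theorem stmt_7_general {A : Type*} [CommRing A] [IsNoetherianRing A]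
    (p₁ p₂ : Ideal A) (h₂ : p₂.IsPrime) (hlt : p₁ < p₂)
    (hP : (p₂.map (Ideal.Quotient.mk p₁)).IsPrime)
    (hht : 2 ≤ Order.height
      (⟨p₂.map (Ideal.Quotient.mk p₁), hP⟩ : PrimeSpectrum (A ⧸ p₁))) :
    {q : Ideal A | q.IsPrime ∧ p₁ < q ∧ q < p₂}.Infinite := by
  intro hfin
  have hle := Ideal.map_height_le_one_of_finite_isPrime_between hlt hfin
  rw [PrimeSpectrum.height_eq_orderHeight ⟨_, hP⟩] at hle
  exact absurd (hht.trans hle) (by norm_num)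

/-- Let `A` be a Noetherian commutative ring and let `p₁ ⊊ p₂` be prime ideals of `A` such that
the height of `p₂/p₁` (i.e. of the image of `p₂` in `A ⧸ p₁`) is at least `2`.  Then there are
infinitely many prime ideals `q` of `A` with `p₁ ⊊ q ⊊ p₂`. -/
theorem stmt_7 {A : Type*} [CommRing A] [IsNoetherianRing A]
    (p₁ p₂ : Ideal A) (h₁ : p₁.IsPrime) (h₂ : p₂.IsPrime) (hlt : p₁ < p₂)
    (hP : (p₂.map (Ideal.Quotient.mk p₁)).IsPrime)
    (hht : 2 ≤ Order.height
      (⟨p₂.map (Ideal.Quotient.mk p₁), hP⟩ : PrimeSpectrum (A ⧸ p₁))) :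
    {q : Ideal A | q.IsPrime ∧ p₁ < q ∧ q < p₂}.Infinite :=
  stmt_7_general p₁ p₂ h₂ hlt hP hht
end

section
/- Let A be a Noetherian local domain of Krull dimension at least 2. Then A has infinitely many prime ideals of height 1. -/
/-!
If there were only finitely many height-one primes, prime avoidance would put the maximal ideal
inside one of them or inside `⊥`: by Krull's principal ideal theorem every nonzero non-unit lies
in a prime of height one. Then the maximal ideal would have height at most one, contradicting
`2 ≤ dim A`.
-/

open IsLocalRing

theorem Ideal.exists_height_eq_one_of_mem_nonZeroDivisors {R : Type*} [CommRing R]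
    [IsNoetherianRing R] {x : R} (hx : x ∈ nonZeroDivisors R) (hxu : ¬IsUnit x) :
    ∃ p : PrimeSpectrum R, Order.height p = 1 ∧ x ∈ p.asIdeal := by
  obtain ⟨p, hp, hxp, hp1⟩ := Ideal.exists_isPrime_height_eq (n := 1)
    (Ideal.height_span_singleton_eq_one_of_mem_nonZeroDivisors hx hxu)
  refine ⟨⟨p, hp⟩, ?_, (Ideal.span_singleton_le_iff_mem _).mp hxp⟩
  rw [← PrimeSpectrum.height_eq_orderHeight]
  exact_mod_cast hp1

theorem IsLocalRing.ringKrullDim_le_one_of_finite_setOf_height_eq_one {R : Type*} [CommRing R]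
    [IsDomain R] [IsNoetherianRing R] [IsLocalRing R]
    (hfin : {p : PrimeSpectrum R | Order.height p = 1}.Finite) : ringKrullDim R ≤ 1 := by
  classical
  let s : Finset (PrimeSpectrum R) := insert ⊥ hfin.toFinset
  have hcover : (maximalIdeal R : Set R) ⊆ ⋃ p ∈ (s : Set (PrimeSpectrum R)), p.asIdeal := by
    intro x hx
    by_cases hx0 : x = 0
    · exact Set.mem_biUnion (x := ⊥) (by simp [s]) (by simp [hx0])
    obtain ⟨p, hp1, hxp⟩ := Ideal.exists_height_eq_one_of_mem_nonZeroDivisors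
      (mem_nonZeroDivisors_of_ne_zero hx0) ((mem_maximalIdeal x).mp hx)
    exact Set.mem_biUnion (by simp [s, hp1]) hxp
  obtain ⟨p, hps, hmp⟩ := (Ideal.subset_union_prime ⊥ ⊥ fun p _ _ _ ↦ p.2).mp hcover
  have hmax : maximalIdeal R = p.asIdeal := le_antisymm hmp (le_maximalIdeal p.2.ne_top)
  have hp : Order.height p ≤ 1 := by
    rcases Finset.mem_insert.mp hps with rfl | hp1
    · simp
    · exact (hfin.mem_toFinset.mp hp1).le
  rw [← maximalIdeal_height_eq_ringKrullDim, hmax, PrimeSpectrum.height_eq_orderHeight]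
  exact_mod_cast hp

/-- A Noetherian local domain of Krull dimension at least `2` has infinitely many prime ideals
of height `1`. -/
theorem stmt_8 {A : Type*} [CommRing A] [IsDomain A] [IsNoetherianRing A] [IsLocalRing A]
    (h : 2 ≤ ringKrullDim A) :
    {p : PrimeSpectrum A | Order.height p = 1}.Infinite := by
  intro hfin
  have := h.trans (ringKrullDim_le_one_of_finite_setOf_height_eq_one hfin)
  norm_num at this
end

section
/- There exists a finite T₀ topological space X with exactly six points that is equidimensional, equicodimensional, and catenary, but in which there exist maximal chains of irreducible closed subsets of lengths 1 and 2; hence weak biequidimensionality does not imply biequidimensionality. -/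
/-!
`P` carries the Alexandrov topology whose closed sets are the down-sets. Being finite and T₀ it
is sober, so `Z ↦ generic point of Z` identifies the poset of irreducible closed subsets with `P`
itself, and every property in question becomes a property of the poset `P`.

The involution `x₁ ↔ x₂, x₃ ↔ x₄, x₅ ↔ x₆` is an order automorphism exchanging the two maximal
and the two minimal points, which gives equidimensionality and equicodimensionality. A rank
function `P → Fin 3` shows that chains have length at most 2; in such a poset a saturated chain
has length 0, 1 or 2 according as its endpoints are equal, form a cover, or neither, whence
catenarity. Finally `x₁ ⋖ x₆` and `x₁ ⋖ x₃ ⋖ x₅` are maximal chains of lengths 1 and 2.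
-/

open Order TopologicalSpace

/-- `X` is equidimensional: all irreducible components have the same dimension. -/
def EquidimensionalSpace (X : Type*) [TopologicalSpace X] : Prop :=
  ∀ Z Z' : IrreducibleCloseds X, IsMax Z → IsMax Z' →
    Order.krullDim (Set.Iic Z) = Order.krullDim (Set.Iic Z')

/-- `X` is equicodimensional: all minimal irreducible closed subsets have the same
codimension in `X`. -/
def EquicodimensionalSpace (X : Type*) [TopologicalSpace X] : Prop :=
  ∀ Y Y' : IrreducibleCloseds X, IsMin Y → IsMin Y' →
    Order.krullDim (Set.Ici Y) = Order.krullDim (Set.Ici Y')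

/-- `X` is catenary: any two saturated chains of irreducible closed subsets with the same
endpoints have the same length. -/
def CatenarySpace (X : Type*) [TopologicalSpace X] : Prop :=
  ∀ p q : RelSeries {x : IrreducibleCloseds X × IrreducibleCloseds X | x.1 ⋖ x.2},
    p.head = q.head → p.last = q.last → p.length = q.length

/-- `X` has a maximal chain of irreducible closed subsets of length `n`. -/
def HasMaxChainOfLength (X : Type*) [TopologicalSpace X] (n : ℕ) : Prop :=
  ∃ p : LTSeries (IrreducibleCloseds X), IsMaximalChain p ∧ p.length = n

namespace LTSeries

variable {α : Type*} [Preorder α]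

lemma head_eq_last_iff (p : LTSeries α) : p.head = p.last ↔ p.length = 0 := by
  rw [RelSeries.head, RelSeries.last, p.strictMono.injective.eq_iff, eq_comm, Fin.last_eq_zero_iff]

end LTSeries

namespace RelSeries

variable {α : Type*} [PartialOrder α]

def toLTSeries (p : RelSeries {x : α × α | x.1 ⋖ x.2}) : LTSeries α :=
  p.ofLE fun _ h => CovBy.lt h

lemma head_covBy_last_iff (p : RelSeries {x : α × α | x.1 ⋖ x.2}) :
    p.head ⋖ p.last ↔ p.length = 1 := by
  constructor
  · intro h
    by_contra hne
    obtain h0 | hpos := Nat.eq_zero_or_pos p.length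
    · exact h.lt.ne (p.toLTSeries.head_eq_last_iff.2 h0)
    have hf := p.toLTSeries.strictMono
    exact h.2 (hf (show (0 : Fin (p.length + 1)) < ⟨1, by omega⟩ by simp [Fin.lt_def]))
      (hf (show (⟨1, by omega⟩ : Fin (p.length + 1)) < Fin.last _ by simp [Fin.lt_def]; omega))
  · obtain ⟨n, f, step⟩ := p
    rintro (rfl : n = 1)
    exact step 0

lemma length_eq_of_krullDim_le_two (hα : krullDim α ≤ 2)
    {p q : RelSeries {x : α × α | x.1 ⋖ x.2}} (hh : p.head = q.head) (hl : p.last = q.last) :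
    p.length = q.length := by
  have hle (r : RelSeries {x : α × α | x.1 ⋖ x.2}) : r.length ≤ 2 := by
    exact_mod_cast r.toLTSeries.length_le_krullDim.trans hα
  have h0 : p.length = 0 ↔ q.length = 0 :=
    (p.toLTSeries.head_eq_last_iff.symm.trans (Eq.congr hh hl)).trans
      q.toLTSeries.head_eq_last_iff
  have h1 : p.length = 1 ↔ q.length = 1 := by
    rw [← head_covBy_last_iff, ← head_covBy_last_iff, hh, hl]
  have := hle p
  have := hle q
  omega

end RelSeries

open Topology

lemma Order.krullDim_fin_le (n : ℕ) : krullDim (Fin (n + 1)) ≤ n :=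
  iSup_le fun p => by
    have := p.length_lt_card
    rw [Fintype.card_fin] at this
    exact_mod_cast Nat.lt_succ_iff.1 this

instance Finite.quasiSober {X : Type*} [TopologicalSpace X] [Finite X] : QuasiSober X := by
  classical
  have := Fintype.ofFinite X
  refine ⟨fun {S} hS hSc => ?_⟩
  obtain ⟨_, hz, hSz⟩ := isIrreducible_iff_sUnion_isClosed.1 hS
    (S.toFinset.image fun x => closure {x}) (by simp)
    (fun x hx => Set.mem_sUnion.2 ⟨closure {x}, by simpa using ⟨x, hx, rfl⟩, subset_closure rfl⟩)
  obtain ⟨x, hx, rfl⟩ := Finset.mem_image.1 hz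
  exact ⟨x, (closure_minimal (by simpa using hx) hSc).antisymm hSz⟩

namespace Topology.IsUpperSet

variable {α : Type*} [PartialOrder α] [TopologicalSpace α] [Topology.IsUpperSet α]

instance : T0Space α :=
  ⟨fun _ _ h => le_antisymm (specializes_iff_le.1 h.specializes')
    (specializes_iff_le.1 h.specializes)⟩

noncomputable def irreducibleClosedsOrderIso [QuasiSober α] : IrreducibleCloseds α ≃o α where
  toEquiv := irreducibleSetEquivPoints.toEquiv
  map_rel_iff' := specializes_iff_le.symm.trans irreducibleSetEquivPoints.map_rel_iff

end Topology.IsUpperSet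

section Transport

variable {X α : Type*} [TopologicalSpace X] [PartialOrder α]

lemma equidimensionalSpace_of_orderIso (e : IrreducibleCloseds X ≃o α)
    (h : ∀ a b : α, IsMax a → IsMax b → height a = height b) : EquidimensionalSpace X := by
  intro Z Z' hZ hZ'
  rw [← height_eq_krullDim_Iic, ← height_eq_krullDim_Iic, ← height_orderIso e Z,
    ← height_orderIso e Z', h _ _ (e.isMax_apply.2 hZ) (e.isMax_apply.2 hZ')]

lemma equicodimensionalSpace_of_orderIso (e : IrreducibleCloseds X ≃o α)
    (h : ∀ a b : α, IsMin a → IsMin b → coheight a = coheight b) :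
    EquicodimensionalSpace X := by
  intro Y Y' hY hY'
  rw [← coheight_eq_krullDim_Ici, ← coheight_eq_krullDim_Ici, ← coheight_orderIso e Y,
    ← coheight_orderIso e Y', h _ _ (e.isMin_apply.2 hY) (e.isMin_apply.2 hY')]

lemma catenarySpace_of_krullDim_le_two (h : krullDim (IrreducibleCloseds X) ≤ 2) :
    CatenarySpace X :=
  fun _ _ => RelSeries.length_eq_of_krullDim_le_two h

lemma IsMaximalChain.map {β : Type*} [PartialOrder β] {p : LTSeries α} (hp : IsMaximalChain p)
    (e : α ≃o β) : IsMaximalChain (p.map e e.strictMono) :=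
  ⟨e.isMin_apply.2 hp.1, e.isMax_apply.2 hp.2.1, fun i => (apply_covBy_apply_iff e).2 (hp.2.2 i)⟩

lemma hasMaxChainOfLength_of_orderIso (e : α ≃o IrreducibleCloseds X) {p : LTSeries α}
    (hp : IsMaximalChain p) : HasMaxChainOfLength X p.length :=
  ⟨_, hp.map e, rfl⟩

end Transport

inductive P : Type
  | x1 | x2 | x3 | x4 | x5 | x6
  deriving DecidableEq

namespace P

instance : Fintype P := ⟨{x1, x2, x3, x4, x5, x6}, fun x => by cases x <;> decide⟩

def leB : P → P → Bool
  | x1, x1 | x1, x3 | x1, x5 | x1, x6 => true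
  | x2, x2 | x2, x4 | x2, x5 | x2, x6 => true
  | x3, x3 | x3, x5 => true
  | x4, x4 | x4, x6 => true
  | x5, x5 | x6, x6 => true
  | _, _ => false

instance : PartialOrder P where
  le a b := leB a b
  le_refl := by decide
  le_trans := by decide
  le_antisymm := by decide

instance : DecidableLE P := fun a b => inferInstanceAs (Decidable (leB a b))

instance : DecidableLT P := decidableLTOfDecidableLE

instance : DecidableRel ((· ⋖ ·) : P → P → Prop) := fun _ _ =>
  inferInstanceAs (Decidable (_ ∧ ∀ _, _))

instance : TopologicalSpace P := Topology.upperSet P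

instance : Topology.IsUpperSet P := ⟨rfl⟩

def swap : P ≃o P where
  toEquiv := Function.Involutive.toPerm
    (fun | x1 => x2 | x2 => x1 | x3 => x4 | x4 => x3 | x5 => x6 | x6 => x5)
    (fun x => by cases x <;> rfl)
  map_rel_iff' {a b} := by cases a <;> cases b <;> decide

def rank : P → Fin 3
  | x1 | x2 => 0
  | x3 | x4 => 1
  | x5 | x6 => 2

lemma strictMono_rank : StrictMono rank := by
  unfold StrictMono
  decide

lemma krullDim_le_two : krullDim P ≤ 2 :=
  (krullDim_le_of_strictMono rank strictMono_rank).trans (krullDim_fin_le 2)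

lemma height_eq_of_isMax {a b : P} (ha : IsMax a) (hb : IsMax b) : height a = height b := by
  have hmax : ∀ c : P, (∀ d, ¬ c < d) → c = x5 ∨ c = x6 := by decide
  have h56 : height x5 = height x6 := (height_orderIso swap x5).symm
  rcases hmax a (isMax_iff_forall_not_lt.1 ha) with rfl | rfl <;>
    rcases hmax b (isMax_iff_forall_not_lt.1 hb) with rfl | rfl
  exacts [rfl, h56, h56.symm, rfl]

lemma coheight_eq_of_isMin {a b : P} (ha : IsMin a) (hb : IsMin b) :
    coheight a = coheight b := by
  have hmin : ∀ c : P, (∀ d, ¬ d < c) → c = x1 ∨ c = x2 := by decide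
  have h12 : coheight x1 = coheight x2 := (coheight_orderIso swap x1).symm
  rcases hmin a (isMin_iff_forall_not_lt.1 ha) with rfl | rfl <;>
    rcases hmin b (isMin_iff_forall_not_lt.1 hb) with rfl | rfl
  exacts [rfl, h12, h12.symm, rfl]

def shortChain : LTSeries P := ⟨1, ![x1, x6], by decide⟩

def longChain : LTSeries P := ⟨2, ![x1, x3, x5], by decide⟩

lemma isMaximalChain_shortChain : IsMaximalChain shortChain :=
  ⟨isMin_iff_forall_not_lt.2 (by decide), isMax_iff_forall_not_lt.2 (by decide), by decide⟩

lemma isMaximalChain_longChain : IsMaximalChain longChain :=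
  ⟨isMin_iff_forall_not_lt.2 (by decide), isMax_iff_forall_not_lt.2 (by decide), by decide⟩

end P

/-- There exists a finite `T₀` topological space with exactly six points that is
equidimensional, equicodimensional and catenary, but which has maximal chains of irreducible
closed subsets of length `1` and of length `2`; hence weak biequidimensionality does not imply
biequidimensionality. -/
theorem stmt_12 :
    ∃ (X : Type) (t : TopologicalSpace X), @T0Space X t ∧ Nat.card X = 6 ∧
      @EquidimensionalSpace X t ∧ @EquicodimensionalSpace X t ∧ @CatenarySpace X t ∧
      @HasMaxChainOfLength X t 1 ∧ @HasMaxChainOfLength X t 2 := by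
  let e : IrreducibleCloseds P ≃o P := Topology.IsUpperSet.irreducibleClosedsOrderIso
  refine ⟨P, inferInstance, inferInstance, Nat.card_eq_fintype_card, ?_, ?_, ?_,
    hasMaxChainOfLength_of_orderIso e.symm P.isMaximalChain_shortChain,
    hasMaxChainOfLength_of_orderIso e.symm P.isMaximalChain_longChain⟩
  · exact equidimensionalSpace_of_orderIso e fun _ _ => P.height_eq_of_isMax
  · exact equicodimensionalSpace_of_orderIso e fun _ _ => P.coheight_eq_of_isMin
  · exact catenarySpace_of_krullDim_le_two (krullDim_eq_of_orderIso e ▸ P.krullDim_le_two)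
end

section
/- Let X be a finite-dimensional Noetherian topological space that is biequidimensional. Then the dimension formula holds: for every irreducible closed subset Y of X, dim(X) = dim(Y) + codim(Y, X). -/
/-!
Concatenating a longest chain ending at `Y` with a longest chain starting at `Y` gives a chain of
length `height Y + coheight Y`, and no chain through `Y` is longer. Such a chain is maximal:
a chain that is not maximal can be extended below its head, above its last element, or inside a
non-covering step, giving a longer chain through the same points. A longest chain of the whole
space is maximal for the same reason, so biequidimensionality gives
`dim X = height Y + coheight Y`, and these are `dim Y` and `codim (Y, X)`.
-/

open Order TopologicalSpace

namespace RelSeries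

variable {α : Type*} {r : SetRel α α}

lemma mem_cons_of_mem {p : RelSeries r} {a x : α} {h : (a, p.head) ∈ r} (hx : x ∈ p) :
    x ∈ p.cons a h := by
  obtain ⟨i, rfl⟩ := hx
  exact ⟨_, p.cons_cast_succ a h i⟩

lemma mem_insertNth_of_mem {p : RelSeries r} {i : Fin p.length} {a x : α}
    {h₁ : (p i.castSucc, a) ∈ r} {h₂ : (a, p i.succ) ∈ r} (hx : x ∈ p) :
    x ∈ p.insertNth i a h₁ h₂ := by
  obtain ⟨j, rfl⟩ := hx
  exact ⟨_, Fin.insertNth_apply_succAbove (α := fun _ => α) (Fin.castSucc i.succ) a p.toFun j⟩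

lemma mem_smash_of_mem_left {p q : RelSeries r} {h : p.last = q.head} {x : α} (hx : x ∈ p) :
    x ∈ p.smash q h := by
  obtain ⟨i, rfl⟩ := hx
  exact ⟨_, smash_castLE h i⟩

end RelSeries

namespace LTSeries

section PartialOrder

variable {α : Type*} [PartialOrder α]

lemma exists_length_succ_superset_of_not_isMaximalChain {q : LTSeries α}
    (hq : ¬IsMaximalChain q) : ∃ p : LTSeries α, p.length = q.length + 1 ∧ ∀ x ∈ q, x ∈ p := by
  by_cases hmin : IsMin q.head
  · by_cases hmax : IsMax q.last
    · obtain ⟨i, hi⟩ : ∃ i : Fin q.length, ¬q i.castSucc ⋖ q i.succ := by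
        simpa [IsMaximalChain, hmin, hmax] using hq
      obtain ⟨z, h₁, h₂⟩ := (not_covBy_iff (q.step i)).mp hi
      exact ⟨q.insertNth i z h₁ h₂, rfl, fun _ => RelSeries.mem_insertNth_of_mem⟩
    · obtain ⟨z, hz⟩ := not_isMax_iff.mp hmax
      exact ⟨q.snoc z hz, by simp, fun _ hx => RelSeries.mem_snoc.mpr (.inl hx)⟩
  · obtain ⟨z, hz⟩ := not_isMin_iff.mp hmin
    exact ⟨q.cons z hz, by simp, fun _ => RelSeries.mem_cons_of_mem⟩

lemma isMaximalChain_of_forall_length_le {q : LTSeries α}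
    (h : ∀ p : LTSeries α, (∀ x ∈ q, x ∈ p) → p.length ≤ q.length) : IsMaximalChain q := by
  by_contra hq
  obtain ⟨p, hlen, hsub⟩ := exists_length_succ_superset_of_not_isMaximalChain hq
  have := h p hsub
  omega

end PartialOrder

lemma length_le_height_add_coheight {α : Type*} [Preorder α] {p : LTSeries α} {a : α}
    (ha : a ∈ p) : (p.length : ℕ∞) ≤ height a + coheight a := by
  obtain ⟨i, rfl⟩ := ha
  calc (p.length : ℕ∞) = ((i : ℕ) + (i.rev : ℕ) : ℕ) := by rw [Fin.val_rev]; congr 1; omega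
    _ ≤ height (p i) + coheight (p i) := by
      push_cast
      exact add_le_add (index_le_height p i) (rev_index_le_coheight p i)

lemma exists_isMaximalChain_length_eq_height_add_coheight {α : Type*} [PartialOrder α] {a : α}
    {m n : ℕ} (hm : height a = m) (hn : coheight a = n) :
    ∃ q : LTSeries α, IsMaximalChain q ∧ q.length = m + n := by
  obtain ⟨p₁, hlast, hlen₁⟩ := exists_series_of_height_eq_coe a hm
  obtain ⟨p₂, hhead, hlen₂⟩ := exists_series_of_coheight_eq_coe a hn
  set q := p₁.smash p₂ (hlast.trans hhead.symm)
  have hlen : q.length = m + n := by simp [q, hlen₁, hlen₂]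
  have ha : a ∈ q := RelSeries.mem_smash_of_mem_left (hlast ▸ p₁.last_mem)
  refine ⟨q, isMaximalChain_of_forall_length_le fun p hp => ?_, hlen⟩
  have := length_le_height_add_coheight (hp a ha)
  rw [hm, hn, hlen] at *
  exact_mod_cast this

end LTSeries

lemma Order.height_lt_top {α : Type*} [Preorder α] [FiniteDimensionalOrder α] (a : α) :
    height a < ⊤ := by
  rw [← WithBot.coe_lt_coe]
  exact (height_le_krullDim a).trans_lt
    (by simpa using krullDim_ne_top_of_finiteDimensionalOrder.lt_top)

theorem Order.krullDim_eq_height_add_coheight_of_isMaximalChain_length_eq {α : Type*}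
    [PartialOrder α] [FiniteDimensionalOrder α]
    (h : ∀ p q : LTSeries α, IsMaximalChain p → IsMaximalChain q → p.length = q.length)
    (a : α) : krullDim α = ↑(height a + coheight a) := by
  obtain ⟨m, hm⟩ := ENat.ne_top_iff_exists.mp (height_lt_top a).ne
  obtain ⟨n, hn⟩ := ENat.ne_top_iff_exists.mp (coheight_lt_top a).ne
  obtain ⟨q, hq, hlen⟩ :=
    LTSeries.exists_isMaximalChain_length_eq_height_add_coheight hm.symm hn.symm
  rw [krullDim_eq_length_of_finiteDimensionalOrder, h _ q LTSeries.isMaximalChain_longestOf hq,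
    hlen, ← hm, ← hn]
  norm_cast

theorem stmt_13_general (X : Type*) [TopologicalSpace X]
    (hfd : topologicalKrullDim X < ⊤)
    (hbieq : ∀ p q : LTSeries (IrreducibleCloseds X),
      IsMaximalChain p → IsMaximalChain q → p.length = q.length) :
    ∀ Y : IrreducibleCloseds X,
      topologicalKrullDim X
        = Order.krullDim (Set.Iic Y) + Order.krullDim (Set.Ici Y) := by
  intro Y
  have : FiniteDimensionalOrder (IrreducibleCloseds X) :=
    finiteDimensionalOrder_iff_krullDim_ne_bot_and_top.mpr
      ⟨krullDim_ne_bot_iff.mpr ⟨Y⟩, hfd.ne⟩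
  rw [← height_eq_krullDim_Iic, ← coheight_eq_krullDim_Ici, ← WithBot.coe_add]
  exact krullDim_eq_height_add_coheight_of_isMaximalChain_length_eq hbieq Y

/-- Let `X` be a finite-dimensional Noetherian topological space that is biequidimensional
(all maximal chains of irreducible closed subsets have the same length).  Then the dimension
formula holds: for every irreducible closed subset `Y` of `X`,
`dim X = dim Y + codim (Y, X)`, where `dim Y` is the Krull dimension of the poset of
irreducible closed subsets contained in `Y` and `codim (Y, X)` that of those containing `Y`. -/
theorem stmt_13 (X : Type*) [TopologicalSpace X] [NoetherianSpace X]
    (hfd : topologicalKrullDim X < ⊤)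
    (hbieq : ∀ p q : LTSeries (IrreducibleCloseds X),
      IsMaximalChain p → IsMaximalChain q → p.length = q.length) :
    ∀ Y : IrreducibleCloseds X,
      topologicalKrullDim X
        = Order.krullDim (Set.Iic Y) + Order.krullDim (Set.Ici Y) :=
  stmt_13_general X hfd hbieq
end
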